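/- If P is symmetric, then the double integral ∫_ℝ ( ∫_ℝ sech(x·y) φ(y − x) dy ) dP(x) = 1 − ρ₁ = ∫ e^{−x²/2} dP(x). That is, the mean complementary activity rate E[sech(XY)] in the signal-plus-noise model equals 1 − ρ₁. -/

import Mathlib

open MeasureTheory Real

/-- The standard normal density. -/
noncomputable def phi (t : ℝ) : ℝ := (Real.sqrt (2 * Real.pi))⁻¹ * Real.exp (-(t ^ 2) / 2)

/-- The sparsity rate `ρ₁ = ∫ (1 - e^{-x²/2}) dP(x)`. -/
noncomputable def sparsityRate (P : Measure ℝ) : ℝ := ∫ x, (1 - Real.exp (-(x ^ 2) / 2)) ∂P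

lemma phi_cont : Continuous phi := by
  unfold phi
  fun_prop

lemma phi_nonneg (t : ℝ) : 0 ≤ phi t := by
  unfold phi
  positivity

lemma phi_integrable_shift (x : ℝ) : Integrable (fun y : ℝ => phi (y - x)) := by
  have h : Integrable (fun y : ℝ => Real.exp (-(1/2) * y ^ 2)) :=
    integrable_exp_neg_mul_sq (by norm_num)
  have h2 := (h.comp_sub_right x).const_mul (Real.sqrt (2 * Real.pi))⁻¹
  refine h2.congr ?_
  filter_upwards with y
  unfold phi
  congr 1
  ring

lemma sech_phi_integrable (x c : ℝ) :
    Integrable (fun y : ℝ => (Real.cosh (x * y))⁻¹ * phi (y - c)) := by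
  refine (phi_integrable_shift c).mono ?_ ?_
  · exact (Continuous.mul ((Real.continuous_cosh.comp (by fun_prop)).inv₀
      (fun y => ne_of_gt (Real.cosh_pos _))) (phi_cont.comp (by fun_prop))).aestronglyMeasurable
  · filter_upwards with y
    rw [norm_mul]
    have h1 : (1:ℝ) ≤ Real.cosh (x * y) := Real.one_le_cosh _
    have h0 : (0:ℝ) < Real.cosh (x * y) := Real.cosh_pos _
    have : ‖(Real.cosh (x * y))⁻¹‖ ≤ 1 := by
      rw [Real.norm_eq_abs, abs_of_pos (inv_pos.mpr h0)]
      exact inv_le_one_of_one_le₀ h1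
    calc ‖(Real.cosh (x * y))⁻¹‖ * ‖phi (y - c)‖ ≤ 1 * ‖phi (y - c)‖ := by
          exact mul_le_mul_of_nonneg_right this (norm_nonneg _)
      _ = ‖phi (y - c)‖ := one_mul _

lemma integral_phi : ∫ y : ℝ, phi y = 1 := by
  unfold phi
  rw [MeasureTheory.integral_const_mul]
  have h : ∫ y : ℝ, Real.exp (-(y ^ 2) / 2) = ∫ y : ℝ, Real.exp (-(1/2) * y ^ 2) := by
    congr 1; funext y; congr 1; ring
  rw [h, integral_gaussian]
  have : Real.pi / (1/2) = 2 * Real.pi := by ring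
  rw [this, inv_mul_cancel₀]
  exact ne_of_gt (Real.sqrt_pos.mpr (by positivity))

/-- Key pointwise identity: the inner integral equals `e^{-x²/2}`. -/
lemma inner_integral (x : ℝ) :
    (∫ y : ℝ, (Real.cosh (x * y))⁻¹ * phi (y - x)) = Real.exp (-(x ^ 2) / 2) := by
  set I := ∫ y : ℝ, (Real.cosh (x * y))⁻¹ * phi (y - x) with hI
  have hflip : (∫ y : ℝ, (Real.cosh (x * y))⁻¹ * phi (y + x)) = I := by
    rw [hI, ← MeasureTheory.integral_neg_eq_self
      (fun y : ℝ => (Real.cosh (x * y))⁻¹ * phi (y + x)) volume]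
    congr 1; funext y
    have h1 : Real.cosh (x * -y) = Real.cosh (x * y) := by
      rw [mul_neg, Real.cosh_neg]
    have h2 : phi (-y + x) = phi (y - x) := by
      unfold phi; congr 2; ring
    rw [h1, h2]
  have hint1 : Integrable (fun y : ℝ => (Real.cosh (x * y))⁻¹ * phi (y - x)) :=
    sech_phi_integrable x x
  have hint2 : Integrable (fun y : ℝ => (Real.cosh (x * y))⁻¹ * phi (y + x)) := by
    have := sech_phi_integrable x (-x)
    refine this.congr ?_
    filter_upwards with y
    congr 1; ring_nf
  have hsum : (∫ y : ℝ, ((Real.cosh (x * y))⁻¹ * phi (y - x) +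
      (Real.cosh (x * y))⁻¹ * phi (y + x))) = 2 * I := by
    rw [MeasureTheory.integral_add hint1 hint2, ← hI, hflip]; ring
  have hpt : ∀ y : ℝ, (Real.cosh (x * y))⁻¹ * phi (y - x) +
      (Real.cosh (x * y))⁻¹ * phi (y + x)
      = 2 * Real.exp (-(x ^ 2) / 2) * phi y := by
    intro y
    have hc : Real.cosh (x * y) ≠ 0 := ne_of_gt (Real.cosh_pos _)
    unfold phi
    rw [Real.cosh_eq]
    have e1 : Real.exp (-((y - x) ^ 2) / 2)
        = Real.exp (-(x ^ 2) / 2) * Real.exp (-(y ^ 2) / 2) * Real.exp (x * y) := by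
      rw [← Real.exp_add, ← Real.exp_add]; congr 1; ring
    have e2 : Real.exp (-((y + x) ^ 2) / 2)
        = Real.exp (-(x ^ 2) / 2) * Real.exp (-(y ^ 2) / 2) * Real.exp (-(x * y)) := by
      rw [← Real.exp_add, ← Real.exp_add]; congr 1; ring
    rw [e1, e2]
    have hc' : Real.exp (x * y) + Real.exp (-(x * y)) ≠ 0 := by
      positivity
    field_simp
  have : (∫ y : ℝ, ((Real.cosh (x * y))⁻¹ * phi (y - x) +
      (Real.cosh (x * y))⁻¹ * phi (y + x)))
      = 2 * Real.exp (-(x ^ 2) / 2) := by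
    calc (∫ y : ℝ, ((Real.cosh (x * y))⁻¹ * phi (y - x) +
        (Real.cosh (x * y))⁻¹ * phi (y + x)))
        = ∫ y : ℝ, 2 * Real.exp (-(x ^ 2) / 2) * phi y := by
          congr 1; funext y; exact hpt y
      _ = 2 * Real.exp (-(x ^ 2) / 2) * ∫ y : ℝ, phi y := by
          rw [MeasureTheory.integral_const_mul]
      _ = 2 * Real.exp (-(x ^ 2) / 2) := by rw [integral_phi, mul_one]
  rw [hsum] at this
  linarith

/-- for symmetric `P`, the mean complementary activity rate
`E[sech(XY)] = ∫ (∫ sech(x y) φ(y - x) dy) dP(x)` equals `1 - ρ₁ = ∫ e^{-x²/2} dP(x)`. -/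
theorem stmt15 (P : Measure ℝ) [IsProbabilityMeasure P]
    (hsymm : Measure.map (fun x : ℝ => -x) P = P) :
    (∫ x, (∫ y : ℝ, (Real.cosh (x * y))⁻¹ * phi (y - x)) ∂P) = 1 - sparsityRate P ∧
    (1 - sparsityRate P) = ∫ x, Real.exp (-(x ^ 2) / 2) ∂P := by
  have hexp_int : Integrable (fun x : ℝ => Real.exp (-(x ^ 2) / 2)) P := by
    refine (integrable_const (1:ℝ)).mono' ?_ ?_
    · exact (Real.continuous_exp.comp (by fun_prop)).aestronglyMeasurable
    · filter_upwards with x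
      rw [Real.norm_eq_abs, abs_of_pos (Real.exp_pos _)]
      exact Real.exp_le_one_iff.mpr (by nlinarith [sq_nonneg x])
  have h2 : (1 - sparsityRate P) = ∫ x, Real.exp (-(x ^ 2) / 2) ∂P := by
    unfold sparsityRate
    rw [MeasureTheory.integral_sub (integrable_const 1) hexp_int,
      MeasureTheory.integral_const]
    simp
  refine ⟨?_, h2⟩
  rw [h2]
  congr 1
  funext x
  exact inner_integral x
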